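/- arXiv:1410.2877 — 2 statements merged into one kernel-verified Lean document; each statement's English description precedes it below -/
import Mathlib

section
/- If t_1 ≤ t_2 ≤ ⋯ is a non-decreasing sequence in [0,1] converging to t, then the sequence of centered upright sets U_(t_i) has a limit, and the limit equals U_(t). -/
/-- The set U_(t) = {(a,b) : at + b(1−t) > 0, or at + b(1−t) = 0 and b > 0}. -/
def Ut (t : ℝ) : Set (ℤ × ℤ) :=
  {p | Odd p.2 ∧ ((p.1 : ℝ) * t + (p.2 : ℝ) * (1 - t) > 0 ∨
    ((p.1 : ℝ) * t + (p.2 : ℝ) * (1 - t) = 0 ∧ 0 < p.2))}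

/-- A sequence of sets has a limit if membership of every point is eventually constant. -/
def HasLimitSeq (U : ℕ → Set (ℤ × ℤ)) : Prop :=
  ∀ p : ℤ × ℤ, ∃ N, (∀ i > N, p ∈ U i) ∨ (∀ i > N, p ∉ U i)

/-- The limit set: points eventually belonging to all sets of the sequence. -/
def limitSet (U : ℕ → Set (ℤ × ℤ)) : Set (ℤ × ℤ) :=
  {p | ∃ N, ∀ i > N, p ∈ U i}

theorem stmt8 (t : ℕ → ℝ) (hmono : Monotone t) (h01 : ∀ i, t i ∈ Set.Icc (0 : ℝ) 1)
    (T : ℝ) (hT : Filter.Tendsto t Filter.atTop (nhds T)) :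
    HasLimitSeq (fun i => Ut (t i)) ∧ limitSet (fun i => Ut (t i)) = Ut T := by
  have hle : ∀ i, t i ≤ T := fun i => hmono.ge_of_tendsto hT i
  have hT0 : 0 ≤ T := le_trans (h01 0).1 (hle 0)
  have key : ∀ p : ℤ × ℤ, ∃ N, ((∀ i > N, p ∈ Ut (t i)) ∧ p ∈ Ut T) ∨
      ((∀ i > N, p ∉ Ut (t i)) ∧ p ∉ Ut T) := by
    rintro ⟨a, b⟩
    by_cases hodd : Odd b
    · have hb0 : (b : ℝ) ≠ 0 := by
        have : b ≠ 0 := by rintro rfl; simp [Int.odd_iff] at hodd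
        exact_mod_cast this
      have hten : Filter.Tendsto (fun i => (a : ℝ) * t i + (b : ℝ) * (1 - t i))
          Filter.atTop (nhds ((a : ℝ) * T + (b : ℝ) * (1 - T))) :=
        (Filter.Tendsto.const_mul (a : ℝ) hT).add
          (Filter.Tendsto.const_mul (b : ℝ) (tendsto_const_nhds.sub hT))
      rcases lt_trichotomy ((a : ℝ) * T + (b : ℝ) * (1 - T)) 0 with hvs | hvs | hvs
      · -- eventually negative : never member (eventually), not in Ut T
        have hev : ∀ᶠ i in Filter.atTop,
            (a : ℝ) * t i + (b : ℝ) * (1 - t i) < 0 := hten (Iio_mem_nhds hvs)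
        rw [Filter.eventually_atTop] at hev
        obtain ⟨N, hN⟩ := hev
        refine ⟨N, Or.inr ⟨fun i hi hm => ?_, fun hm => ?_⟩⟩
        · rcases hm.2 with h | h
          · exact absurd h (not_lt.2 (le_of_lt (hN i hi.le)))
          · exact absurd h.1 (ne_of_lt (hN i hi.le))
        · rcases hm.2 with h | h
          · exact absurd h (not_lt.2 hvs.le)
          · exact absurd h.1 (ne_of_lt hvs)
      · -- v = 0 case
        have hvi : ∀ s : ℝ, (a : ℝ) * s + (b : ℝ) * (1 - s)
            = ((a : ℝ) - b) * (s - T) := by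
          intro s; nlinarith [hvs]
        rcases lt_trichotomy ((a : ℝ) - b) 0 with hc | hc | hc
        · -- c < 0 : b > 0, always member
          have hb' : (0 : ℝ) ≤ b := by
            nlinarith [mul_nonneg (neg_nonneg.2 hc.le) hT0]
          have hbpos : (0 : ℝ) < b := lt_of_le_of_ne hb' (Ne.symm hb0)
          have hbz : 0 < b := by exact_mod_cast hbpos
          refine ⟨0, Or.inl ⟨fun i _ => ?_, ⟨hodd, Or.inr ⟨hvs, hbz⟩⟩⟩⟩
          refine ⟨hodd, ?_⟩
          have hnn : 0 ≤ ((a : ℝ) - b) * (t i - T) := by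
            nlinarith [hle i]
          rcases eq_or_lt_of_le hnn with h | h
          · exact Or.inr ⟨by rw [hvi (t i), ← h], hbz⟩
          · exact Or.inl (by rw [hvi (t i)]; linarith)
        · -- c = 0 : then b = 0, contradiction with b odd
          exfalso
          have hab : (a : ℝ) = b := by linarith
          have haT : (a : ℝ) * T = (b : ℝ) * T := by rw [hab]
          have : (b : ℝ) = 0 := by nlinarith [hvs, haT]
          exact hb0 this
        · -- c > 0 : b < 0, never member
          have hb' : (b : ℝ) ≤ 0 := by
            nlinarith [mul_nonneg hc.le hT0]
          have hbneg : (b : ℝ) < 0 := lt_of_le_of_ne hb' hb0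
          have hbz : ¬ (0 < b) := by
            intro h; have : (0 : ℝ) < b := by exact_mod_cast h
            linarith
          refine ⟨0, Or.inr ⟨fun i _ hm => ?_, fun hm => ?_⟩⟩
          · rcases hm.2 with h | h
            · have hnp : ((a : ℝ) - b) * (t i - T) ≤ 0 := by
                nlinarith [hle i]
              rw [hvi (t i)] at h; linarith
            · exact hbz h.2
          · rcases hm.2 with h | h
            · simp only at h; linarith
            · exact hbz h.2
      · -- v > 0 : eventually member
        have hev : ∀ᶠ i in Filter.atTop,
            0 < (a : ℝ) * t i + (b : ℝ) * (1 - t i) := hten (Ioi_mem_nhds hvs)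
        rw [Filter.eventually_atTop] at hev
        obtain ⟨N, hN⟩ := hev
        exact ⟨N, Or.inl ⟨fun i hi => ⟨hodd, Or.inl (hN i hi.le)⟩, ⟨hodd, Or.inl hvs⟩⟩⟩
    · exact ⟨0, Or.inr ⟨fun i _ hm => hodd hm.1, fun hm => hodd hm.1⟩⟩
  constructor
  · intro p
    obtain ⟨N, h⟩ := key p
    exact ⟨N, h.imp (fun h => h.1) (fun h => h.1)⟩
  · ext p
    obtain ⟨N, h⟩ := key p
    constructor
    · rintro ⟨N0, hN0⟩
      rcases h with h | h
      · exact h.2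
      · exact absurd (hN0 (max N N0 + 1) (by omega)) (h.1 (max N N0 + 1) (by omega))
    · intro hp
      rcases h with h | h
      · exact ⟨N, h.1⟩
      · exact absurd hp h.2
end

section
/- Let V be an F_2-vector space with endomorphisms d and a family (h_s) indexed by nonempty subsets s of a finite set S, satisfying h_s h_t = h_{s∪t} for disjoint s,t and h_s h_t = 0 otherwise. Define d'' = d + [h_{{c}}, d] for a fixed c ∈ S, where [x,y] = xy + yx. Then d + Σ_{∅≠s⊆S}[h_s, d] + Σ_{∅≠s,t⊆S, s∩t=∅} h_s d h_t equals d'' + Σ_{∅≠s⊆S∖{c}}[h_s, d''] + Σ_{∅≠s,t⊆S∖{c}, s∩t=∅} h_s d'' h_t. -/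
open LinearMap Finset

lemma aux_split {S : Type*} [Fintype S] [DecidableEq S] (c : S)
    {M : Type*} [AddCommMonoid M] (f : Finset S → M) :
    ∑ s ∈ Finset.univ.filter (fun s : Finset S => s.Nonempty), f s
      = f {c} + ((∑ s ∈ Finset.univ.filter (fun s : Finset S => s.Nonempty ∧ c ∉ s), f s)
        + ∑ s ∈ Finset.univ.filter (fun s : Finset S => s.Nonempty ∧ c ∉ s), f (insert c s)) := by
  have hP : Finset.univ.filter (fun s : Finset S => s.Nonempty)
      = insert {c} ((Finset.univ.filter fun s : Finset S => s.Nonempty ∧ c ∉ s)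
        ∪ (Finset.univ.filter fun s : Finset S => s.Nonempty ∧ c ∉ s).image (insert c)) := by
    ext s
    simp only [Finset.mem_insert, Finset.mem_filter, Finset.mem_union, Finset.mem_image,
      Finset.mem_univ, true_and]
    constructor
    · intro hs
      by_cases hcs : c ∈ s
      · by_cases h1 : s = {c}
        · exact Or.inl h1
        · refine Or.inr (Or.inr ⟨s.erase c, ⟨?_, Finset.notMem_erase _ _⟩,
            Finset.insert_erase hcs⟩)
          rw [Finset.nonempty_iff_ne_empty]
          intro he
          rcases (Finset.erase_eq_empty_iff s c).mp he with h2 | h2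
          · exact hs.ne_empty h2
          · exact h1 h2
      · exact Or.inr (Or.inl ⟨hs, hcs⟩)
    · rintro (rfl | ⟨h1, _⟩ | ⟨t, ⟨ht1, _⟩, rfl⟩)
      · exact Finset.singleton_nonempty c
      · exact h1
      · exact Finset.insert_nonempty _ _
  rw [hP, Finset.sum_insert, Finset.sum_union, Finset.sum_image]
  · intro a ha b hb hab
    have ha' := (Finset.mem_filter.mp ha).2.2
    have hb' := (Finset.mem_filter.mp hb).2.2
    rw [← Finset.erase_insert ha', hab, Finset.erase_insert hb']
  · rw [Finset.disjoint_left]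
    rintro a ha hb
    rcases Finset.mem_image.mp hb with ⟨t, ht, rfl⟩
    exact (Finset.mem_filter.mp ha).2.2 (Finset.mem_insert_self c t)
  · simp only [Finset.mem_union, Finset.mem_filter, Finset.mem_image, Finset.mem_univ, true_and]
    rintro (⟨_, hc⟩ | ⟨t, ⟨ht1, ht2⟩, ht3⟩)
    · exact hc (Finset.mem_singleton_self c)
    · rcases ht1 with ⟨x, hx⟩
      have : x ∈ ({c} : Finset S) := ht3 ▸ Finset.mem_insert_of_mem hx
      exact ht2 ((Finset.mem_singleton.mp this) ▸ hx)

theorem stmt13 {S V : Type*} [Fintype S] [DecidableEq S]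
    [AddCommGroup V] [Module (ZMod 2) V]
    (d : V →ₗ[ZMod 2] V) (h : Finset S → (V →ₗ[ZMod 2] V))
    (hmul : ∀ s t : Finset S, s.Nonempty → t.Nonempty →
      (Disjoint s t → h s ∘ₗ h t = h (s ∪ t)) ∧ (¬Disjoint s t → h s ∘ₗ h t = 0))
    (c : S) (d'' : V →ₗ[ZMod 2] V)
    -- d'' = d + [h_{c}, d]
    (hd'' : d'' = d + (h {c} ∘ₗ d + d ∘ₗ h {c})) :
    d + (∑ s ∈ Finset.univ.filter (fun s : Finset S => s.Nonempty),
          (h s ∘ₗ d + d ∘ₗ h s))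
      + (∑ s ∈ Finset.univ.filter (fun s : Finset S => s.Nonempty),
          ∑ t ∈ Finset.univ.filter (fun t : Finset S => t.Nonempty),
            if Disjoint s t then h s ∘ₗ d ∘ₗ h t else 0)
    = d'' + (∑ s ∈ Finset.univ.filter (fun s : Finset S => s.Nonempty ∧ c ∉ s),
          (h s ∘ₗ d'' + d'' ∘ₗ h s))
      + (∑ s ∈ Finset.univ.filter (fun s : Finset S => s.Nonempty ∧ c ∉ s),
          ∑ t ∈ Finset.univ.filter (fun t : Finset S => t.Nonempty ∧ c ∉ t),
            if Disjoint s t then h s ∘ₗ d'' ∘ₗ h t else 0) := by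
  subst hd''
  -- basic product facts
  have hsc : ∀ s : Finset S, s.Nonempty → c ∉ s → h s ∘ₗ h {c} = h (insert c s) := by
    intro s h1 h2
    rw [(hmul s {c} h1 (Finset.singleton_nonempty c)).1 (Finset.disjoint_singleton_right.2 h2),
      Finset.union_comm, ← Finset.insert_eq]
  have hcs : ∀ s : Finset S, s.Nonempty → c ∉ s → h {c} ∘ₗ h s = h (insert c s) := by
    intro s h1 h2
    rw [(hmul {c} s (Finset.singleton_nonempty c) h1).1 (Finset.disjoint_singleton_left.2 h2),
      ← Finset.insert_eq]
  have A1 : (∑ t ∈ Finset.univ.filter (fun t : Finset S => t.Nonempty),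
        if Disjoint ({c} : Finset S) t then h {c} ∘ₗ d ∘ₗ h t else 0)
      = ∑ t ∈ Finset.univ.filter (fun t : Finset S => t.Nonempty ∧ c ∉ t),
          h {c} ∘ₗ d ∘ₗ h t := by
    rw [aux_split c (fun t : Finset S => if Disjoint ({c} : Finset S) t then h {c} ∘ₗ d ∘ₗ h t else 0),
      if_neg (by simp),
      Finset.sum_congr rfl (fun t ht =>
        if_pos (Finset.disjoint_singleton_left.2 (Finset.mem_filter.mp ht).2.2)),
      Finset.sum_eq_zero (fun t ht => if_neg (by simp))]
    abel
  have A2 : ∀ s ∈ Finset.univ.filter (fun s : Finset S => s.Nonempty ∧ c ∉ s),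
      (∑ t ∈ Finset.univ.filter (fun t : Finset S => t.Nonempty),
        if Disjoint s t then h s ∘ₗ d ∘ₗ h t else 0)
      = (h s ∘ₗ d ∘ₗ h {c})
        + ((∑ t ∈ Finset.univ.filter (fun t : Finset S => t.Nonempty ∧ c ∉ t),
            if Disjoint s t then h s ∘ₗ d ∘ₗ h t else 0)
          + ∑ t ∈ Finset.univ.filter (fun t : Finset S => t.Nonempty ∧ c ∉ t),
            if Disjoint s t then h s ∘ₗ d ∘ₗ h (insert c t) else 0) := by
    intro s hs
    obtain ⟨hs1, hs2⟩ := (Finset.mem_filter.mp hs).2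
    have e : (∑ t ∈ Finset.univ.filter (fun t : Finset S => t.Nonempty ∧ c ∉ t),
        if Disjoint s (insert c t) then h s ∘ₗ d ∘ₗ h (insert c t) else 0)
        = ∑ t ∈ Finset.univ.filter (fun t : Finset S => t.Nonempty ∧ c ∉ t),
            if Disjoint s t then h s ∘ₗ d ∘ₗ h (insert c t) else 0 :=
      Finset.sum_congr rfl (fun t ht => by
        simp only [Finset.disjoint_insert_right, hs2, not_false_iff, true_and])
    rw [aux_split c (fun t : Finset S => if Disjoint s t then h s ∘ₗ d ∘ₗ h t else 0),
      if_pos (Finset.disjoint_singleton_right.2 hs2), e]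
  have A3 : ∀ s ∈ Finset.univ.filter (fun s : Finset S => s.Nonempty ∧ c ∉ s),
      (∑ t ∈ Finset.univ.filter (fun t : Finset S => t.Nonempty),
        if Disjoint (insert c s) t then h (insert c s) ∘ₗ d ∘ₗ h t else 0)
      = ∑ t ∈ Finset.univ.filter (fun t : Finset S => t.Nonempty ∧ c ∉ t),
          if Disjoint s t then h (insert c s) ∘ₗ d ∘ₗ h t else 0 := by
    intro s hs
    obtain ⟨hs1, hs2⟩ := (Finset.mem_filter.mp hs).2
    have e1 : (∑ t ∈ Finset.univ.filter (fun t : Finset S => t.Nonempty ∧ c ∉ t),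
        if Disjoint (insert c s) t then h (insert c s) ∘ₗ d ∘ₗ h t else 0)
        = ∑ t ∈ Finset.univ.filter (fun t : Finset S => t.Nonempty ∧ c ∉ t),
            if Disjoint s t then h (insert c s) ∘ₗ d ∘ₗ h t else 0 :=
      Finset.sum_congr rfl (fun t ht => by
        simp only [Finset.disjoint_insert_left, (Finset.mem_filter.mp ht).2.2, not_false_iff, true_and])
    have e2 : (∑ t ∈ Finset.univ.filter (fun t : Finset S => t.Nonempty ∧ c ∉ t),
        if Disjoint (insert c s) (insert c t) then h (insert c s) ∘ₗ d ∘ₗ h (insert c t) else 0)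
        = 0 :=
      Finset.sum_eq_zero (fun t ht => by
        rw [if_neg]
        simp only [Finset.disjoint_insert_left]
        intro hx
        exact hx.1 (Finset.mem_insert_self c t))
    rw [aux_split c (fun t : Finset S => if Disjoint (insert c s) t then h (insert c s) ∘ₗ d ∘ₗ h t else 0),
      if_neg (by simp), e1, e2]
    abel
  have B1 : ∀ s ∈ Finset.univ.filter (fun s : Finset S => s.Nonempty ∧ c ∉ s),
      (h s ∘ₗ (d + (h {c} ∘ₗ d + d ∘ₗ h {c}))
        + (d + (h {c} ∘ₗ d + d ∘ₗ h {c})) ∘ₗ h s)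
      = ((h s ∘ₗ d + d ∘ₗ h s) + (h (insert c s) ∘ₗ d + d ∘ₗ h (insert c s)))
        + ((h {c} ∘ₗ d ∘ₗ h s) + (h s ∘ₗ d ∘ₗ h {c})) := by
    intro s hs
    obtain ⟨hs1, hs2⟩ := (Finset.mem_filter.mp hs).2
    have e1 : h s ∘ₗ (h {c} ∘ₗ d) = h (insert c s) ∘ₗ d := by
      rw [← LinearMap.comp_assoc, hsc s hs1 hs2]
    simp only [comp_add, add_comp, LinearMap.comp_assoc, e1, hcs s hs1 hs2]
    abel
  have B2 : ∀ s ∈ Finset.univ.filter (fun s : Finset S => s.Nonempty ∧ c ∉ s),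
      ∀ t ∈ Finset.univ.filter (fun t : Finset S => t.Nonempty ∧ c ∉ t),
      (if Disjoint s t then h s ∘ₗ (d + (h {c} ∘ₗ d + d ∘ₗ h {c})) ∘ₗ h t else 0)
      = (if Disjoint s t then h s ∘ₗ d ∘ₗ h t else 0)
        + ((if Disjoint s t then h (insert c s) ∘ₗ d ∘ₗ h t else 0)
          + (if Disjoint s t then h s ∘ₗ d ∘ₗ h (insert c t) else 0)) := by
    intro s hs t ht
    obtain ⟨hs1, hs2⟩ := (Finset.mem_filter.mp hs).2
    obtain ⟨ht1, ht2⟩ := (Finset.mem_filter.mp ht).2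
    by_cases hst : Disjoint s t
    · simp only [if_pos hst]
      have e1 : h s ∘ₗ (h {c} ∘ₗ (d ∘ₗ h t)) = h (insert c s) ∘ₗ (d ∘ₗ h t) := by
        rw [← LinearMap.comp_assoc, hsc s hs1 hs2]
      simp only [comp_add, add_comp, LinearMap.comp_assoc, e1, hcs t ht1 ht2]
    · simp only [if_neg hst, add_zero]
  have B2' : ∀ s ∈ Finset.univ.filter (fun s : Finset S => s.Nonempty ∧ c ∉ s),
      (∑ t ∈ Finset.univ.filter (fun t : Finset S => t.Nonempty ∧ c ∉ t),
        if Disjoint s t then h s ∘ₗ (d + (h {c} ∘ₗ d + d ∘ₗ h {c})) ∘ₗ h t else 0)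
      = ∑ t ∈ Finset.univ.filter (fun t : Finset S => t.Nonempty ∧ c ∉ t),
          ((if Disjoint s t then h s ∘ₗ d ∘ₗ h t else 0)
            + ((if Disjoint s t then h (insert c s) ∘ₗ d ∘ₗ h t else 0)
              + (if Disjoint s t then h s ∘ₗ d ∘ₗ h (insert c t) else 0))) :=
    fun s hs => Finset.sum_congr rfl (B2 s hs)
  rw [aux_split c (fun s : Finset S => h s ∘ₗ d + d ∘ₗ h s),
    aux_split c (fun s : Finset S =>
      ∑ t ∈ Finset.univ.filter (fun t : Finset S => t.Nonempty),
        if Disjoint s t then h s ∘ₗ d ∘ₗ h t else 0),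
    A1, Finset.sum_congr rfl A2, Finset.sum_congr rfl A3,
    Finset.sum_congr rfl B1, Finset.sum_congr rfl B2']
  simp only [Finset.sum_add_distrib]
  abel
end
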